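/- arXiv:2507.09978 — 10 statements merged into one kernel-verified Lean document; each statement's English description precedes it below -/
import Mathlib

section
/- For 1 < σ < 2 and ε > 0, define Φ(s) = (1/σ)[(ε+|s|)^σ − ε^σ] − ε^(σ−1)|s| and Ψ(s) = (ε+|s|)^(σ/2) − ε^(σ/2). Then for every real s, (2(σ−1)/σ²)·Ψ(s)² ≤ Φ(s). -/
/-!
Write `u = ε + |s|` and `k = 2(σ - 1)/σ ∈ [0, 1]`. The difference `Φ - (2(σ-1)/σ²) Ψ²` vanishes at
`s = 0` and, as a function of `|s|`, has derivative `(1 - k) u^(σ-1) + k ε^(σ/2) u^(σ/2-1) - ε^(σ-1)`.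
This is nonnegative by the weighted AM-GM inequality, since the exponents are chosen so that the
geometric mean `(u^(σ-1))^(1-k) (ε^(σ/2) u^(σ/2-1))^k` is exactly `ε^(σ-1)`.
-/

open Real Set

lemma rpow_sub_one_le_weighted_sum {σ a u : ℝ} (hσ1 : 1 ≤ σ) (hσ2 : σ ≤ 2) (ha : 0 ≤ a)
    (hu : 0 < u) :
    a ^ (σ - 1) ≤ (1 - 2 * (σ - 1) / σ) * u ^ (σ - 1)
      + 2 * (σ - 1) / σ * (a ^ (σ / 2) * u ^ (σ / 2 - 1)) := by
  set k := 2 * (σ - 1) / σ with hk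
  have hσ0 : 0 < σ := by linarith
  have hk0 : 0 ≤ k := div_nonneg (by linarith) hσ0.le
  have hk1 : k ≤ 1 := (div_le_one hσ0).2 (by linarith)
  have hamgm := geom_mean_le_arith_mean2_weighted (sub_nonneg.2 hk1) hk0
    (rpow_nonneg hu.le (σ - 1)) (mul_nonneg (rpow_nonneg ha (σ / 2)) (rpow_nonneg hu.le (σ / 2 - 1)))
    (by ring)
  have hexp_a : σ / 2 * k = σ - 1 := by rw [hk]; field_simp
  have hexp_u : (σ - 1) * (1 - k) + (σ / 2 - 1) * k = 0 := by rw [hk]; field_simp; ring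
  have hgeom : (u ^ (σ - 1)) ^ (1 - k) * (a ^ (σ / 2) * u ^ (σ / 2 - 1)) ^ k = a ^ (σ - 1) := by
    rw [mul_rpow (rpow_nonneg ha _) (rpow_nonneg hu.le _), ← rpow_mul ha, ← rpow_mul hu.le,
      ← rpow_mul hu.le, mul_left_comm, ← rpow_add hu, hexp_u, hexp_a, rpow_zero, mul_one]
  rwa [hgeom] at hamgm

/-- `Φ(s) - (2(σ-1)/σ²) Ψ(s)²` evaluated at `t = |s|`. -/
noncomputable def phiSubPsiSq (σ ε t : ℝ) : ℝ :=
  (1 / σ) * ((ε + t) ^ σ - ε ^ σ) - ε ^ (σ - 1) * t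
    - 2 * (σ - 1) / σ ^ 2 * ((ε + t) ^ (σ / 2) - ε ^ (σ / 2)) ^ 2

lemma hasDerivAt_phiSubPsiSq {σ ε t : ℝ} (hσ : σ ≠ 0) (ht : 0 < ε + t) :
    HasDerivAt (phiSubPsiSq σ ε)
      ((1 - 2 * (σ - 1) / σ) * (ε + t) ^ (σ - 1)
        + 2 * (σ - 1) / σ * (ε ^ (σ / 2) * (ε + t) ^ (σ / 2 - 1)) - ε ^ (σ - 1)) t := by
  have hu : HasDerivAt (fun t => ε + t) 1 t := (hasDerivAt_id t).const_add ε
  have hΦ := (((hu.rpow_const (p := σ) (Or.inl ht.ne')).sub_const (ε ^ σ)).const_mul (1 / σ)).sub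
    ((hasDerivAt_id t).const_mul (ε ^ (σ - 1)))
  have hΨ := (((hu.rpow_const (p := σ / 2) (Or.inl ht.ne')).sub_const (ε ^ (σ / 2))).pow 2).const_mul
    (2 * (σ - 1) / σ ^ 2)
  have hsplit : (ε + t) ^ (σ / 2) * (ε + t) ^ (σ / 2 - 1) = (ε + t) ^ (σ - 1) := by
    rw [← rpow_add ht]; ring_nf
  refine (hΦ.sub hΨ).congr_deriv ?_
  rw [← hsplit]
  generalize (ε + t) ^ (σ / 2) = A
  generalize (ε + t) ^ (σ / 2 - 1) = B
  field_simp
  ring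

lemma monotoneOn_phiSubPsiSq {σ ε : ℝ} (hσ1 : 1 ≤ σ) (hσ2 : σ ≤ 2) (hε : 0 < ε) :
    MonotoneOn (phiSubPsiSq σ ε) (Ici 0) := by
  have hderiv (t : ℝ) (ht : t ∈ Ici 0) :=
    hasDerivAt_phiSubPsiSq (σ := σ) (ε := ε) (by linarith) (by rw [mem_Ici] at ht; linarith)
  refine monotoneOn_of_hasDerivWithinAt_nonneg (convex_Ici 0)
    (fun t ht => (hderiv t ht).continuousAt.continuousWithinAt)
    (fun t ht => (hderiv t (interior_subset ht)).hasDerivWithinAt) (fun t ht => ?_)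
  have ht : 0 ≤ t := interior_subset (s := Ici (0 : ℝ)) ht
  exact sub_nonneg.2 (rpow_sub_one_le_weighted_sum hσ1 hσ2 hε.le (by linarith))

theorem stmt0 (σ ε : ℝ) (hσ1 : 1 < σ) (hσ2 : σ < 2) (hε : 0 < ε) (s : ℝ) :
    (2 * (σ - 1) / σ ^ 2) * ((ε + |s|) ^ (σ / 2) - ε ^ (σ / 2)) ^ 2 ≤
      (1 / σ) * ((ε + |s|) ^ σ - ε ^ σ) - ε ^ (σ - 1) * |s| := by
  have hzero : phiSubPsiSq σ ε 0 = 0 := by simp [phiSubPsiSq]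
  have hmono := monotoneOn_phiSubPsiSq hσ1.le hσ2.le hε self_mem_Ici (abs_nonneg s)
    (abs_nonneg s)
  rw [hzero] at hmono
  exact sub_nonneg.1 hmono
end

section
/- For 1 < σ < 2 and ε > 0, define Φ(s) = (1/σ)[(ε+|s|)^σ − ε^σ] − ε^(σ−1)|s| and Ψ(s) = (ε+|s|)^(σ/2) − ε^(σ/2). Then for every real s, Φ(s) ≤ Ψ(s)². -/
/-!
Put `t = ε + |s|` and view `Ψ² - Φ` as a function of `t ≥ ε`. It vanishes at `t = ε`, and its
derivative `σ t^(σ/2-1) (t^(σ/2) - ε^(σ/2)) - (t^(σ-1) - ε^(σ-1))` is nonnegative: since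
`σ/2 - 1 ≤ 0`, the first term is at least `σ (t^(σ-1) - ε^(σ-1))`, and `σ ≥ 1`.
-/

open Real Set

noncomputable def psiSqSubPhi (σ ε t : ℝ) : ℝ :=
  (t ^ (σ / 2) - ε ^ (σ / 2)) ^ 2 - ((1 / σ) * (t ^ σ - ε ^ σ) - ε ^ (σ - 1) * (t - ε))

section

variable {σ ε t : ℝ}

lemma hasDerivAt_psiSqSubPhi (hσ : σ ≠ 0) (ht : t ≠ 0) :
    HasDerivAt (psiSqSubPhi σ ε)
      (σ * t ^ (σ / 2 - 1) * (t ^ (σ / 2) - ε ^ (σ / 2)) - (t ^ (σ - 1) - ε ^ (σ - 1))) t := by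
  have hhalf : HasDerivAt (fun t : ℝ => t ^ (σ / 2)) (σ / 2 * t ^ (σ / 2 - 1)) t :=
    hasDerivAt_rpow_const (Or.inl ht)
  have hfull : HasDerivAt (fun t : ℝ => t ^ σ) (σ * t ^ (σ - 1)) t :=
    hasDerivAt_rpow_const (Or.inl ht)
  have h := ((hhalf.sub_const (ε ^ (σ / 2))).pow 2).sub
    (((hfull.sub_const (ε ^ σ)).const_mul (1 / σ)).sub
      (((hasDerivAt_id t).sub_const ε).const_mul (ε ^ (σ - 1))))
  refine h.congr_deriv ?_
  field_simp
  ring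

lemma rpow_sub_one_sub_le (hσ1 : 1 ≤ σ) (hσ2 : σ ≤ 2) (hε : 0 < ε) (hεt : ε ≤ t) :
    t ^ (σ - 1) - ε ^ (σ - 1) ≤ σ * t ^ (σ / 2 - 1) * (t ^ (σ / 2) - ε ^ (σ / 2)) := by
  have ht : 0 < t := hε.trans_le hεt
  have hsplit : ∀ {x : ℝ}, 0 < x → x ^ (σ / 2) * x ^ (σ / 2 - 1) = x ^ (σ - 1) := fun hx => by
    rw [← rpow_add hx]; ring_nf
  have hdecr : t ^ (σ / 2 - 1) ≤ ε ^ (σ / 2 - 1) := rpow_le_rpow_of_nonpos hε hεt (by linarith)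
  have hincr : ε ^ (σ - 1) ≤ t ^ (σ - 1) := rpow_le_rpow hε.le hεt (by linarith)
  have hcross : ε ^ (σ / 2) * t ^ (σ / 2 - 1) ≤ ε ^ (σ - 1) :=
    hsplit hε ▸ mul_le_mul_of_nonneg_left hdecr (by positivity)
  have hexpand : σ * t ^ (σ / 2 - 1) * (t ^ (σ / 2) - ε ^ (σ / 2)) =
      σ * t ^ (σ - 1) - σ * (ε ^ (σ / 2) * t ^ (σ / 2 - 1)) := by
    rw [← hsplit ht]; ring
  rw [hexpand]
  nlinarith [mul_le_mul_of_nonneg_left hcross (by linarith : (0 : ℝ) ≤ σ)]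

lemma monotoneOn_psiSqSubPhi (hσ1 : 1 ≤ σ) (hσ2 : σ ≤ 2) (hε : 0 < ε) :
    MonotoneOn (psiSqSubPhi σ ε) (Ici ε) := by
  have hσ : σ ≠ 0 := by positivity
  have hderiv : ∀ t ∈ interior (Ici ε), HasDerivAt (psiSqSubPhi σ ε)
      (σ * t ^ (σ / 2 - 1) * (t ^ (σ / 2) - ε ^ (σ / 2)) - (t ^ (σ - 1) - ε ^ (σ - 1))) t := by
    rw [interior_Ici]
    exact fun t ht => hasDerivAt_psiSqSubPhi hσ (hε.trans ht).ne'
  have hcont : ContinuousOn (psiSqSubPhi σ ε) (Ici ε) := fun t ht =>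
    (hasDerivAt_psiSqSubPhi hσ (hε.trans_le ht).ne').continuousAt.continuousWithinAt
  refine monotoneOn_of_deriv_nonneg (convex_Ici ε) hcont
    (fun t ht => (hderiv t ht).differentiableAt.differentiableWithinAt) fun t ht => ?_
  rw [(hderiv t ht).deriv, sub_nonneg]
  rw [interior_Ici] at ht
  exact rpow_sub_one_sub_le hσ1 hσ2 hε ht.le

lemma psiSqSubPhi_nonneg (hσ1 : 1 ≤ σ) (hσ2 : σ ≤ 2) (hε : 0 < ε) (hεt : ε ≤ t) :
    0 ≤ psiSqSubPhi σ ε t := by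
  have hmono := monotoneOn_psiSqSubPhi hσ1 hσ2 hε self_mem_Ici hεt hεt
  simpa [psiSqSubPhi] using hmono

end

theorem stmt1 (σ ε : ℝ) (hσ1 : 1 < σ) (hσ2 : σ < 2) (hε : 0 < ε) (s : ℝ) :
    (1 / σ) * ((ε + |s|) ^ σ - ε ^ σ) - ε ^ (σ - 1) * |s| ≤
      ((ε + |s|) ^ (σ / 2) - ε ^ (σ / 2)) ^ 2 := by
  have h := psiSqSubPhi_nonneg hσ1.le hσ2.le hε (le_add_of_nonneg_right (abs_nonneg s))
  rwa [psiSqSubPhi, add_sub_cancel_left, sub_nonneg] at h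
end

section
/- For 1 < σ < 2 and ε > 0, define φ(s) = [(ε+|s|)^(σ−1) − ε^(σ−1)]·sign(s) and Ψ(s) = (ε+|s|)^(σ/2) − ε^(σ/2). Then for every real s, |φ(s)| ≤ Ψ(s)^(2(σ−1)/σ). -/
/-!
Since `2(σ - 1)/σ ∈ [0, 1]`, the map `t ↦ t ^ (2(σ - 1)/σ)` is subadditive on `[0, ∞)`.
Applied to `ε ^ (σ/2) ≤ (ε + |s|) ^ (σ/2)` this gives
`(ε + |s|) ^ (σ - 1) - ε ^ (σ - 1) ≤ ((ε + |s|) ^ (σ/2) - ε ^ (σ/2)) ^ (2(σ - 1)/σ)`,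
and the factor `sign s` only decreases the absolute value.
-/

namespace Real

lemma abs_sign_le_one (r : ℝ) : |sign r| ≤ 1 := by
  rcases sign_apply_eq r with h | h | h <;> simp [h]

lemma abs_mul_sign_le (a r : ℝ) : |a * sign r| ≤ |a| := by
  rw [abs_mul]
  exact mul_le_of_le_one_right (abs_nonneg a) (abs_sign_le_one r)

lemma rpow_sub_rpow_le_sub_rpow {x y p : ℝ} (hy : 0 ≤ y) (hyx : y ≤ x) (hp : 0 ≤ p)
    (hp1 : p ≤ 1) : x ^ p - y ^ p ≤ (x - y) ^ p := by
  have h := rpow_add_le_add_rpow (sub_nonneg.2 hyx) hy hp hp1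
  rw [sub_add_cancel] at h
  linarith

lemma rpow_mul_sub_rpow_mul_le {x y q p : ℝ} (hy : 0 ≤ y) (hyx : y ≤ x) (hq : 0 ≤ q)
    (hp : 0 ≤ p) (hp1 : p ≤ 1) : x ^ (q * p) - y ^ (q * p) ≤ (x ^ q - y ^ q) ^ p := by
  rw [rpow_mul (hy.trans hyx), rpow_mul hy]
  exact rpow_sub_rpow_le_sub_rpow (rpow_nonneg hy q) (rpow_le_rpow hy hyx hq) hp hp1

end Real

theorem stmt2 (σ ε : ℝ) (hσ1 : 1 < σ) (hσ2 : σ < 2) (hε : 0 < ε) (s : ℝ) :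
    |((ε + |s|) ^ (σ - 1) - ε ^ (σ - 1)) * Real.sign s| ≤
      ((ε + |s|) ^ (σ / 2) - ε ^ (σ / 2)) ^ (2 * (σ - 1) / σ) := by
  have hσ : 0 < σ := by linarith
  have hεs : ε ≤ ε + |s| := le_add_of_nonneg_right (abs_nonneg s)
  have hp0 : 0 ≤ 2 * (σ - 1) / σ := div_nonneg (by linarith) hσ.le
  have hp1 : 2 * (σ - 1) / σ ≤ 1 := by rw [div_le_one hσ]; linarith
  have hexp : σ - 1 = σ / 2 * (2 * (σ - 1) / σ) := by field_simp
  calc |((ε + |s|) ^ (σ - 1) - ε ^ (σ - 1)) * Real.sign s|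
      ≤ |(ε + |s|) ^ (σ - 1) - ε ^ (σ - 1)| := Real.abs_mul_sign_le _ _
    _ = (ε + |s|) ^ (σ - 1) - ε ^ (σ - 1) :=
        abs_of_nonneg (sub_nonneg.2 (Real.rpow_le_rpow hε.le hεs (by linarith)))
    _ ≤ ((ε + |s|) ^ (σ / 2) - ε ^ (σ / 2)) ^ (2 * (σ - 1) / σ) := by
        simpa only [← hexp] using
          Real.rpow_mul_sub_rpow_mul_le hε.le hεs (by positivity : 0 ≤ σ / 2) hp0 hp1
end

section
/- For 1 < σ < 2 and ε > 0, define φ(s) = [(ε+|s|)^(σ−1) − ε^(σ−1)]·sign(s) and Ψ(s) = (ε+|s|)^(σ/2) − ε^(σ/2). Then for every real s, s·φ(s) ≤ (2/σ)·Ψ(s)². -/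
/-!
With `a = ε`, `b = ε + |s|`, `A = a ^ (σ/2)` and `B = b ^ (σ/2)` one has `s φ(s) = (b - a)(B²/b - A²/a)`,
and `(B - A)² - (b - a)(B²/b - A²/a) = (aB - bA)²/(ab) ≥ 0`. So `s φ(s) ≤ Ψ(s)²` for every `σ`,
and the factor `2/σ ≥ 1` only weakens this.
-/

open Real

lemma sub_mul_sub_sq_div_le_sq {a b : ℝ} (ha : 0 < a) (hb : 0 < b) (A B : ℝ) :
    (b - a) * (B ^ 2 / b - A ^ 2 / a) ≤ (B - A) ^ 2 := by
  have hgap : (B - A) ^ 2 - (b - a) * (B ^ 2 / b - A ^ 2 / a) = (a * B - b * A) ^ 2 / (a * b) := by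
    field_simp
    ring
  have : 0 ≤ (a * B - b * A) ^ 2 / (a * b) := by positivity
  linarith

lemma Real.rpow_sub_one_eq_sq_rpow_half_div {x : ℝ} (hx : 0 < x) (σ : ℝ) :
    x ^ (σ - 1) = (x ^ (σ / 2)) ^ 2 / x := by
  rw [← rpow_natCast, ← rpow_mul hx.le, rpow_sub_one hx.ne']
  norm_num

lemma Real.sub_mul_rpow_sub_one_sub_le_sq {a b : ℝ} (ha : 0 < a) (hb : 0 < b) (σ : ℝ) :
    (b - a) * (b ^ (σ - 1) - a ^ (σ - 1)) ≤ (b ^ (σ / 2) - a ^ (σ / 2)) ^ 2 := by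
  rw [rpow_sub_one_eq_sq_rpow_half_div ha, rpow_sub_one_eq_sq_rpow_half_div hb]
  exact sub_mul_sub_sq_div_le_sq ha hb _ _

lemma Real.mul_mul_sign_self (s x : ℝ) : s * (x * Real.sign s) = |s| * x := by
  rcases lt_trichotomy s 0 with h | rfl | h
  · rw [sign_of_neg h, abs_of_neg h]; ring
  · simp
  · rw [sign_of_pos h, abs_of_pos h]; ring

theorem stmt3 (σ ε : ℝ) (hσ1 : 1 < σ) (hσ2 : σ < 2) (hε : 0 < ε) (s : ℝ) :
    s * (((ε + |s|) ^ (σ - 1) - ε ^ (σ - 1)) * Real.sign s) ≤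
      (2 / σ) * ((ε + |s|) ^ (σ / 2) - ε ^ (σ / 2)) ^ 2 := by
  have hΨ := sub_mul_rpow_sub_one_sub_le_sq hε (by positivity : 0 < ε + |s|) σ
  have hσ : 1 ≤ 2 / σ := by rw [le_div_iff₀ (by linarith)]; linarith
  rw [add_sub_cancel_left] at hΨ
  rw [mul_mul_sign_self]
  exact hΨ.trans (le_mul_of_one_le_left (sq_nonneg _) hσ)
end

section
/- Fix 0 < λ < 1 and ε > 0, and define φ_ε(s) = (ε^(−λ) − (ε+|s|)^(−λ))·sign(s). Then there exist positive constants c₁, c₂ depending only on λ (not on ε) such that for all ε > 0 and all real s: c₁·|s| / (ε^λ (ε+|s|)) ≤ |φ_ε(s)| ≤ c₂·|s| / (ε^λ (ε+|s|)). -/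
/-!
With `u = ε / (ε + t)` one has `ε ^ (-λ) - (ε + t) ^ (-λ) = ε ^ (-λ) * (1 - u ^ λ)` and
`t / (ε ^ λ * (ε + t)) = ε ^ (-λ) * (1 - u)`, so the claim reduces to the `ε`-free inequality
`λ * (1 - u) ≤ 1 - u ^ λ ≤ 1 - u` on `[0, 1]`: Bernoulli's inequality for the concave power `u ^ λ`
on one side, `u ≤ u ^ λ` on the other. Hence `c₁ = λ`, `c₂ = 1`.
-/

namespace Real

lemma mul_one_sub_le_one_sub_rpow {u p : ℝ} (hu : 0 ≤ u) (hp0 : 0 ≤ p) (hp1 : p ≤ 1) :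
    p * (1 - u) ≤ 1 - u ^ p := by
  have := rpow_one_add_le_one_add_mul_self (s := u - 1) (by linarith) hp0 hp1
  rw [add_sub_cancel] at this
  linarith

lemma one_sub_rpow_le_one_sub {u p : ℝ} (hu0 : 0 ≤ u) (hu1 : u ≤ 1) (hp1 : p ≤ 1) :
    1 - u ^ p ≤ 1 - u :=
  sub_le_sub_left (self_le_rpow_of_le_one hu0 hu1 hp1) 1

lemma rpow_neg_sub_rpow_neg_eq {ε t p : ℝ} (hε : 0 < ε) (ht : 0 ≤ t) :
    ε ^ (-p) - (ε + t) ^ (-p) = ε ^ (-p) * (1 - (ε / (ε + t)) ^ p) := by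
  have hεt : 0 < ε + t := by linarith
  rw [div_rpow hε.le hεt.le, rpow_neg hε.le, rpow_neg hεt.le]
  have := rpow_pos_of_pos hε p
  have := rpow_pos_of_pos hεt p
  field_simp

lemma div_rpow_mul_eq {ε t p : ℝ} (hε : 0 < ε) (ht : 0 ≤ t) :
    t / (ε ^ p * (ε + t)) = ε ^ (-p) * (1 - ε / (ε + t)) := by
  have hεt : 0 < ε + t := by linarith
  rw [rpow_neg hε.le]
  have := rpow_pos_of_pos hε p
  field_simp
  ring

lemma rpow_neg_sub_rpow_neg_bounds {ε t p : ℝ} (hε : 0 < ε) (ht : 0 ≤ t)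
    (hp0 : 0 ≤ p) (hp1 : p ≤ 1) :
    p * t / (ε ^ p * (ε + t)) ≤ ε ^ (-p) - (ε + t) ^ (-p) ∧
      ε ^ (-p) - (ε + t) ^ (-p) ≤ t / (ε ^ p * (ε + t)) := by
  have hεt : 0 < ε + t := by linarith
  have hu0 : 0 ≤ ε / (ε + t) := by positivity
  have hu1 : ε / (ε + t) ≤ 1 := (div_le_one hεt).2 (by linarith)
  have hεp : 0 ≤ ε ^ (-p) := (rpow_pos_of_pos hε _).le
  rw [mul_div_assoc, rpow_neg_sub_rpow_neg_eq hε ht, div_rpow_mul_eq hε ht, mul_left_comm]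
  exact ⟨mul_le_mul_of_nonneg_left (mul_one_sub_le_one_sub_rpow hu0 hp0 hp1) hεp,
    mul_le_mul_of_nonneg_left (one_sub_rpow_le_one_sub hu0 hu1 hp1) hεp⟩

end Real

theorem stmt4 (lam : ℝ) (hl0 : 0 < lam) (hl1 : lam < 1) :
    ∃ c₁ c₂ : ℝ, 0 < c₁ ∧ 0 < c₂ ∧ ∀ ε : ℝ, 0 < ε → ∀ s : ℝ,
      c₁ * |s| / (ε ^ lam * (ε + |s|)) ≤
        |(ε ^ (-lam) - (ε + |s|) ^ (-lam)) * Real.sign s| ∧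
      |(ε ^ (-lam) - (ε + |s|) ^ (-lam)) * Real.sign s| ≤
        c₂ * |s| / (ε ^ lam * (ε + |s|)) := by
  refine ⟨lam, 1, hl0, one_pos, fun ε hε s => ?_⟩
  rcases eq_or_ne s 0 with rfl | hs
  · simp
  have hbounds := Real.rpow_neg_sub_rpow_neg_bounds hε (abs_nonneg s) hl0.le hl1.le
  have hφ : |(ε ^ (-lam) - (ε + |s|) ^ (-lam)) * Real.sign s| =
      ε ^ (-lam) - (ε + |s|) ^ (-lam) := by
    have hsign : |Real.sign s| = 1 := by
      rcases Real.sign_apply_eq_of_ne_zero s hs with h | h <;> simp [h]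
    have hlower : 0 ≤ lam * |s| / (ε ^ lam * (ε + |s|)) := by positivity
    rw [abs_mul, hsign, mul_one, abs_of_nonneg (hlower.trans hbounds.1)]
  rw [hφ, one_mul]
  exact hbounds
end

section
/- Fix 0 < λ < 1 and ε > 0, and define Φ_ε(s) = |s|/ε^λ − (1/(1−λ))·[(ε+|s|)^(1−λ) − ε^(1−λ)]. Then there exist positive constants c₃, c₄ depending only on λ such that for all ε > 0 and all real s: c₃·s² / (ε^λ (ε+|s|)) ≤ Φ_ε(s) ≤ c₄·s² / (ε^λ (ε+|s|)). -/
/-!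
Write `Ψ_ε(a) = a² / (ε^λ (ε + a))` for `a ≥ 0`. Both `Φ_ε` and `Ψ_ε` vanish at `0`, and with
`x = ε / (ε + a) ∈ (0, 1]` their derivatives are `(1 - x^λ) / ε^λ` and `(1 - x²) / ε^λ`.
Since `x² ≤ x^λ` and, by Bernoulli's inequality `x^λ ≤ 1 + λ (x - 1)`,
`1 - x^λ ≥ λ (1 - x) ≥ (λ / 2) (1 - x²)`, comparing derivatives gives
`(λ / 2) Ψ_ε ≤ Φ_ε ≤ Ψ_ε` on `[0, ∞)`.
-/

open Real Set

noncomputable def Φ (lam ε a : ℝ) : ℝ :=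
  a / ε ^ lam - (1 / (1 - lam)) * ((ε + a) ^ (1 - lam) - ε ^ (1 - lam))

noncomputable def Ψ (lam ε a : ℝ) : ℝ :=
  a ^ 2 / (ε ^ lam * (ε + a))

theorem image_le_of_hasDerivAt_le_Ici {f g f' g' : ℝ → ℝ} {a₀ : ℝ}
    (hf : ∀ x ∈ Ici a₀, HasDerivAt f (f' x) x) (hg : ∀ x ∈ Ici a₀, HasDerivAt g (g' x) x)
    (h₀ : f a₀ ≤ g a₀) (hle : ∀ x ∈ Ici a₀, f' x ≤ g' x) {x : ℝ} (hx : a₀ ≤ x) :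
    f x ≤ g x := by
  have hcont : ∀ {h h' : ℝ → ℝ}, (∀ x ∈ Ici a₀, HasDerivAt h (h' x) x) →
      ContinuousOn h (Icc a₀ x) :=
    fun hh y hy => (hh y hy.1).continuousAt.continuousWithinAt
  exact image_le_of_deriv_right_le_deriv_boundary (hcont hf)
    (fun y hy => (hf y hy.1).hasDerivWithinAt) h₀ (hcont hg)
    (fun y hy => (hg y hy.1).hasDerivWithinAt) (fun y hy => hle y hy.1) ⟨hx, le_rfl⟩

theorem one_sub_rpow_bounds {lam x : ℝ} (hl0 : 0 < lam) (hl1 : lam < 1) (hx0 : 0 < x)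
    (hx1 : x ≤ 1) :
    lam / 2 * (1 - x ^ 2) ≤ 1 - x ^ lam ∧ 1 - x ^ lam ≤ 1 - x ^ 2 := by
  have hbernoulli : x ^ lam ≤ 1 + lam * (x - 1) := by
    simpa using rpow_one_add_le_one_add_mul_self (s := x - 1) (by linarith) hl0.le hl1.le
  have hsq : x ^ 2 ≤ x ^ lam := by
    simpa [rpow_two] using rpow_le_rpow_of_exponent_ge hx0 hx1 (by linarith : lam ≤ 2)
  constructor
  · nlinarith [mul_nonneg hl0.le (sq_nonneg (1 - x))]
  · linarith

section Derivatives

variable {lam ε a : ℝ}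

theorem hasDerivAt_Φ (hl1 : lam < 1) (hε : 0 < ε) (ha : 0 ≤ a) :
    HasDerivAt (Φ lam ε) ((1 - (ε / (ε + a)) ^ lam) / ε ^ lam) a := by
  have hεa : 0 < ε + a := by linarith
  have hpow : HasDerivAt (fun a => (ε + a) ^ (1 - lam))
      (1 * (1 - lam) * (ε + a) ^ (1 - lam - 1)) a :=
    ((hasDerivAt_id a).const_add ε).rpow_const (Or.inl hεa.ne')
  refine (((hasDerivAt_id a).div_const (ε ^ lam)).sub
    ((hpow.sub_const (ε ^ (1 - lam))).const_mul (1 / (1 - lam)))).congr_deriv ?_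
  have hl : 1 - lam ≠ 0 := by linarith
  rw [show 1 - lam - 1 = -lam by ring, rpow_neg hεa.le, div_rpow hε.le hεa.le]
  field_simp

theorem hasDerivAt_Ψ (hε : 0 < ε) (ha : 0 ≤ a) :
    HasDerivAt (Ψ lam ε) ((1 - (ε / (ε + a)) ^ 2) / ε ^ lam) a := by
  have hεa : 0 < ε + a := by linarith
  have hden : HasDerivAt (fun a => ε ^ lam * (ε + a)) (ε ^ lam * 1) a :=
    ((hasDerivAt_id a).const_add ε).const_mul _
  refine ((hasDerivAt_pow 2 a).div hden (by positivity)).congr_deriv ?_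
  field_simp
  ring

end Derivatives

theorem Φ_bounds {lam ε a : ℝ} (hl0 : 0 < lam) (hl1 : lam < 1) (hε : 0 < ε) (ha : 0 ≤ a) :
    lam / 2 * Ψ lam ε a ≤ Φ lam ε a ∧ Φ lam ε a ≤ Ψ lam ε a := by
  have hx : ∀ b ∈ Ici (0 : ℝ), 0 < ε / (ε + b) ∧ ε / (ε + b) ≤ 1 := fun b (hb : 0 ≤ b) =>
    ⟨by positivity, (div_le_one (by linarith)).2 (by linarith)⟩
  have hΦ : ∀ b ∈ Ici (0 : ℝ), HasDerivAt (Φ lam ε) _ b := fun b hb => hasDerivAt_Φ hl1 hε hb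
  have hΨ : ∀ b ∈ Ici (0 : ℝ), HasDerivAt (Ψ lam ε) _ b := fun b hb => hasDerivAt_Ψ hε hb
  have hΦ0 : Φ lam ε 0 = 0 := by simp [Φ]
  have hΨ0 : Ψ lam ε 0 = 0 := by simp [Ψ]
  constructor
  · refine image_le_of_hasDerivAt_le_Ici (fun b hb => (hΨ b hb).const_mul (lam / 2)) hΦ
      (by simp [hΦ0, hΨ0]) (fun b hb => ?_) ha
    rw [← mul_div_assoc]
    gcongr
    exact (one_sub_rpow_bounds hl0 hl1 (hx b hb).1 (hx b hb).2).1
  · refine image_le_of_hasDerivAt_le_Ici hΦ hΨ (by simp [hΦ0, hΨ0]) (fun b hb => ?_) ha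
    gcongr ?_ / _
    exact (one_sub_rpow_bounds hl0 hl1 (hx b hb).1 (hx b hb).2).2

theorem stmt6 (lam : ℝ) (hl0 : 0 < lam) (hl1 : lam < 1) :
    ∃ c₃ c₄ : ℝ, 0 < c₃ ∧ 0 < c₄ ∧ ∀ ε : ℝ, 0 < ε → ∀ s : ℝ,
      c₃ * s ^ 2 / (ε ^ lam * (ε + |s|)) ≤
        |s| / ε ^ lam - (1 / (1 - lam)) * ((ε + |s|) ^ (1 - lam) - ε ^ (1 - lam)) ∧
      |s| / ε ^ lam - (1 / (1 - lam)) * ((ε + |s|) ^ (1 - lam) - ε ^ (1 - lam)) ≤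
        c₄ * s ^ 2 / (ε ^ lam * (ε + |s|)) := by
  refine ⟨lam / 2, 1, by positivity, one_pos, fun ε hε s => ?_⟩
  rw [← sq_abs s, mul_div_assoc, mul_div_assoc, one_mul]
  exact Φ_bounds hl0 hl1 hε (abs_nonneg s)
end

section
/- Let δ > 0 and define Ψ(s) = ∫₀^s sqrt(Φ''(z)) dz where Φ(s) = e^(δ s²). Then there exists a constant c(δ) > 0 such that Ψ(s)² ≤ c(δ)·e^(δ s²) for all real s. -/
/-!
For `z ≥ 0`, `√Φ''(z)` is at most `√Φ''(1)` on `[0, 1]` and at most `√(2δ + 4δ²) z e^{δz²/2}`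
beyond, so integrating gives `Ψ(s) ≤ (√(2δ + 4δ²)/δ) e^{δs²/2} + √Φ''(1) s`, and
`√(2δ) s ≤ 1 + δs²/2 ≤ e^{δs²/2}` absorbs the linear term. Squaring gives the claim for `s ≥ 0`,
and `Ψ` is odd.
-/

open Real Set intervalIntegral

theorem intervalIntegral.integral_zero_neg_of_even {E : Type*} [NormedAddCommGroup E]
    [NormedSpace ℝ E] {f : ℝ → E} (hf : ∀ x, f (-x) = f x) (s : ℝ) :
    ∫ x in (0:ℝ)..-s, f x = -∫ x in (0:ℝ)..s, f x := by
  calc ∫ x in (0:ℝ)..-s, f x = ∫ x in (0:ℝ)..-s, f (-x) := by simp only [hf]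
    _ = ∫ x in -(-s)..-0, f x := integral_comp_neg f
    _ = -∫ x in (0:ℝ)..s, f x := by rw [neg_neg, neg_zero, integral_symm]

theorem Real.sqrt_two_mul_mul_le_exp {a : ℝ} (ha : 0 ≤ a) (s : ℝ) :
    √(2 * a) * s ≤ exp (a * s ^ 2 / 2) := by
  have hsq : √(2 * a) ^ 2 = 2 * a := sq_sqrt (by positivity)
  -- `√(2a) s ≤ 1 + a s² / 2` is AM-GM.
  nlinarith [add_one_le_exp (a * s ^ 2 / 2), sq_nonneg (√(2 * a) * s - 2)]

namespace GaussianPotential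

variable {δ : ℝ}

/-- `√Φ''` for `Φ(z) = exp (δ z²)`. -/
noncomputable def sqrtSecondDeriv (δ z : ℝ) : ℝ :=
  √((2 * δ + 4 * δ ^ 2 * z ^ 2) * exp (δ * z ^ 2))

theorem sqrtSecondDeriv_nonneg (z : ℝ) : 0 ≤ sqrtSecondDeriv δ z := sqrt_nonneg _

theorem continuous_sqrtSecondDeriv : Continuous (sqrtSecondDeriv δ) := by
  unfold sqrtSecondDeriv; fun_prop

theorem sqrtSecondDeriv_neg (z : ℝ) : sqrtSecondDeriv δ (-z) = sqrtSecondDeriv δ z := by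
  simp [sqrtSecondDeriv]

theorem sqrtSecondDeriv_eq (hδ : 0 < δ) (z : ℝ) :
    sqrtSecondDeriv δ z = √(2 * δ + 4 * δ ^ 2 * z ^ 2) * exp (δ * z ^ 2 / 2) := by
  rw [sqrtSecondDeriv, sqrt_mul (by positivity), ← exp_half, mul_div_assoc]

theorem sqrtSecondDeriv_le (hδ : 0 < δ) {z : ℝ} (hz : 0 ≤ z) :
    sqrtSecondDeriv δ z ≤ √(2 * δ + 4 * δ ^ 2) * z * exp (δ * z ^ 2 / 2) + sqrtSecondDeriv δ 1 := by
  have hexp : 0 ≤ √(2 * δ + 4 * δ ^ 2) * z * exp (δ * z ^ 2 / 2) := by positivity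
  rcases le_total z 1 with hz1 | hz1
  · have hz2 : z ^ 2 ≤ 1 := by nlinarith
    have hmono : sqrtSecondDeriv δ z ≤ sqrtSecondDeriv δ 1 := by
      unfold sqrtSecondDeriv
      gcongr
    linarith
  · have hz2 : 1 ≤ z ^ 2 := by nlinarith
    have hroot : √(2 * δ + 4 * δ ^ 2 * z ^ 2) ≤ √(2 * δ + 4 * δ ^ 2) * z := by
      calc √(2 * δ + 4 * δ ^ 2 * z ^ 2) ≤ √((2 * δ + 4 * δ ^ 2) * z ^ 2) := by
            gcongr; nlinarith
        _ = √(2 * δ + 4 * δ ^ 2) * z := by rw [sqrt_mul (by positivity), sqrt_sq hz]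
    rw [sqrtSecondDeriv_eq hδ]
    nlinarith [exp_pos (δ * z ^ 2 / 2), sqrtSecondDeriv_nonneg (δ := δ) 1]

theorem integral_sqrtSecondDeriv_le (hδ : 0 < δ) {s : ℝ} (hs : 0 ≤ s) :
    ∫ z in (0:ℝ)..s, sqrtSecondDeriv δ z ≤
      (√(2 * δ + 4 * δ ^ 2) / δ + sqrtSecondDeriv δ 1 / √(2 * δ)) * exp (δ * s ^ 2 / 2) := by
  set A := √(2 * δ + 4 * δ ^ 2)
  set B := sqrtSecondDeriv δ 1
  -- An antiderivative of the pointwise bound `sqrtSecondDeriv_le`.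
  set g : ℝ → ℝ := fun z => A / δ * exp (δ * z ^ 2 / 2) + B * z
  have hg : ∀ z, HasDerivAt g (A * z * exp (δ * z ^ 2 / 2) + B) z := by
    intro z
    have hquad : HasDerivAt (fun t : ℝ => δ * t ^ 2 / 2) (δ * z) z := by
      simpa [mul_comm, mul_div_assoc] using ((hasDerivAt_pow 2 z).const_mul δ).div_const 2
    refine ((hquad.exp.const_mul (A / δ)).add ((hasDerivAt_id z).const_mul B)).congr_deriv ?_
    field_simp [hδ.ne']
  have hFTC : ∫ z in (0:ℝ)..s, sqrtSecondDeriv δ z ≤ g s - g 0 :=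
    integral_le_sub_of_hasDeriv_right_of_le hs (by fun_prop)
      (fun z _ => (hg z).hasDerivWithinAt)
      (continuous_sqrtSecondDeriv.integrableOn_Icc)
      (fun z hz => sqrtSecondDeriv_le hδ hz.1.le)
  have hg0 : g 0 = A / δ := by simp [g]
  have hBs : B * s ≤ B / √(2 * δ) * exp (δ * s ^ 2 / 2) := by
    have hroot : 0 < √(2 * δ) := sqrt_pos.mpr (by positivity)
    rw [div_mul_eq_mul_div, le_div_iff₀ hroot, mul_assoc, mul_comm s]
    exact mul_le_mul_of_nonneg_left (sqrt_two_mul_mul_le_exp hδ.le s) (sqrtSecondDeriv_nonneg 1)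
  calc ∫ z in (0:ℝ)..s, sqrtSecondDeriv δ z ≤ g s - g 0 := hFTC
    _ ≤ g s := by rw [hg0]; exact sub_le_self _ (by positivity)
    _ ≤ _ := by simp only [g]; linarith

theorem sq_integral_sqrtSecondDeriv_le (hδ : 0 < δ) (s : ℝ) :
    (∫ z in (0:ℝ)..s, sqrtSecondDeriv δ z) ^ 2 ≤
      (√(2 * δ + 4 * δ ^ 2) / δ + sqrtSecondDeriv δ 1 / √(2 * δ)) ^ 2 * exp (δ * s ^ 2) := by
  wlog hs : 0 ≤ s generalizing s
  · simpa [integral_zero_neg_of_even sqrtSecondDeriv_neg] using this (-s) (by linarith)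
  have hnonneg : 0 ≤ ∫ z in (0:ℝ)..s, sqrtSecondDeriv δ z :=
    integral_nonneg hs fun z _ => sqrtSecondDeriv_nonneg z
  calc (∫ z in (0:ℝ)..s, sqrtSecondDeriv δ z) ^ 2
      ≤ ((√(2 * δ + 4 * δ ^ 2) / δ + sqrtSecondDeriv δ 1 / √(2 * δ)) *
          exp (δ * s ^ 2 / 2)) ^ 2 := by
        gcongr; exact integral_sqrtSecondDeriv_le hδ hs
    _ = _ := by rw [mul_pow, ← exp_nat_mul]; push_cast; ring_nf

end GaussianPotential

open GaussianPotential in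
theorem stmt8 (δ : ℝ) (hδ : 0 < δ) :
    ∃ c : ℝ, 0 < c ∧ ∀ s : ℝ,
      (∫ z in (0:ℝ)..s, Real.sqrt ((2 * δ + 4 * δ ^ 2 * z ^ 2) * Real.exp (δ * z ^ 2))) ^ 2
        ≤ c * Real.exp (δ * s ^ 2) := by
  have hA : 0 < √(2 * δ + 4 * δ ^ 2) / δ := by positivity
  have hB : 0 ≤ sqrtSecondDeriv δ 1 / √(2 * δ) :=
    div_nonneg (sqrtSecondDeriv_nonneg 1) (by positivity)
  exact ⟨_, by positivity, sq_integral_sqrtSecondDeriv_le hδ⟩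
end

section
/- Let N ≥ 3 and let Γ: [0,∞) → [0,∞) be an increasing convex function with Γ(0) = 0 and Γ(t) = t^((N²+N+2)/(N(N+1)))·exp((N+2)/N · t^(2/(N+1))) for t ≥ k₀, for some k₀ > 0. Let Γ*(s) = ∫₀^s (Γ')^(−1)(τ) dτ be its Legendre conjugate primitive. Then there exists c > 0 such that Γ*(s) ≤ c·s·(log* s)^((N+1)/2) for all s ≥ 0, where log* s = max{1, log s}. -/
/-! Since `Γ` is convex with `Γ 0 = 0`, `Γ x / x ≤ Γ' x`. So if `Γ' x = τ` with `x` beyond `k₀`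
and `1`, the explicit formula gives `exp (x ^ (2 / (N + 1))) ≤ Γ x / x ≤ τ`, i.e.
`x ≤ (log τ) ^ ((N + 1) / 2)`. Hence the integrand `(Γ')⁻¹` is bounded on `[0, s]` by a constant
multiple of `(log* s) ^ ((N + 1) / 2)`, and integrating gives the claim. -/

open Real

lemma ConvexOn.div_le_deriv_of_map_zero {f : ℝ → ℝ} (hf : ConvexOn ℝ (Set.Ici 0) f)
    (hf0 : f 0 = 0) {x : ℝ} (hx : 0 < x) (hfx : DifferentiableAt ℝ f x) :
    f x / x ≤ deriv f x := by
  simpa [slope, hf0, div_eq_inv_mul] using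
    hf.slope_le_deriv Set.self_mem_Ici (Set.mem_Ici.2 hx.le) hx hfx

lemma Function.invFun_le_max_arbitrary {α β : Type*} [LinearOrder α] [Nonempty α]
    {f : α → β} {b : β} {B : α} (hB : ∀ a, f a = b → a ≤ B) :
    Function.invFun f b ≤ max B (Classical.arbitrary α) := by
  by_cases h : ∃ a, f a = b
  · exact le_max_of_le_left (hB _ (Function.invFun_eq h))
  · exact le_max_of_le_right (Function.invFun_neg h).le

lemma intervalIntegral.integral_le_mul_of_le {f : ℝ → ℝ} {s M : ℝ} (hs : 0 ≤ s) (hM : 0 ≤ M)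
    (hf : ∀ τ ∈ Set.Icc 0 s, f τ ≤ M) :
    ∫ τ in (0 : ℝ)..s, f τ ≤ s * M := by
  by_cases hint : IntervalIntegrable f MeasureTheory.volume 0 s
  · simpa using intervalIntegral.integral_mono_on hs hint intervalIntegrable_const hf
  · rw [intervalIntegral.integral_undef hint]
    positivity

lemma Real.max_one_log_le_max_one_log {τ s : ℝ} (hτ : 0 ≤ τ) (hτs : τ ≤ s) :
    max 1 (log τ) ≤ max 1 (log s) := by
  rcases hτ.eq_or_lt with rfl | hτ
  · simp
  · exact max_le_max_left _ (log_le_log hτ hτs)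

lemma Real.exp_rpow_le_rpow_mul_exp_div_self {x α β γ : ℝ} (hx : 1 ≤ x) (hα : 1 ≤ α)
    (hβ : 1 ≤ β) :
    exp (x ^ γ) ≤ x ^ α * exp (β * x ^ γ) / x := by
  have hxγ : 0 ≤ x ^ γ := rpow_nonneg (by linarith) _
  calc exp (x ^ γ) ≤ exp (β * x ^ γ) := exp_le_exp.2 (by nlinarith)
    _ ≤ x ^ (α - 1) * exp (β * x ^ γ) :=
        le_mul_of_one_le_left (exp_pos _).le (one_le_rpow hx (by linarith))
    _ = x ^ α * exp (β * x ^ γ) / x := by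
        rw [rpow_sub (by linarith), rpow_one]; ring

lemma Real.le_max_one_log_rpow_inv_of_exp_rpow_le {x γ τ : ℝ} (hx : 0 ≤ x) (hγ : 0 < γ)
    (h : exp (x ^ γ) ≤ τ) :
    x ≤ max 1 (log τ) ^ γ⁻¹ := by
  have hlog : x ^ γ ≤ log τ := (le_log_iff_exp_le ((exp_pos _).trans_le h)).2 h
  calc x = (x ^ γ) ^ γ⁻¹ := by rw [← rpow_mul hx, mul_inv_cancel₀ hγ.ne', rpow_one]
    _ ≤ max 1 (log τ) ^ γ⁻¹ :=
        rpow_le_rpow (rpow_nonneg hx _) (hlog.trans (le_max_right _ _)) (inv_nonneg.2 hγ.le)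

lemma le_of_deriv_eq_of_eq_rpow_mul_exp {Γ : ℝ → ℝ} {k₀ α β γ : ℝ} (hα : 1 ≤ α) (hβ : 1 ≤ β)
    (hγ : 0 < γ) (hconv : ConvexOn ℝ (Set.Ici 0) Γ) (hΓ0 : Γ 0 = 0)
    (hdiff : ∀ t, 0 ≤ t → DifferentiableAt ℝ Γ t)
    (hformula : ∀ t, k₀ ≤ t → Γ t = t ^ α * exp (β * t ^ γ)) {x τ : ℝ} (hx : deriv Γ x = τ) :
    x ≤ max (max k₀ 1) (max 1 (log τ) ^ γ⁻¹) := by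
  rcases le_or_gt x (max k₀ 1) with hle | hlt
  · exact le_max_of_le_left hle
  obtain ⟨hk₀x, h1x⟩ := max_lt_iff.1 hlt
  have hx0 : 0 < x := one_pos.trans h1x
  refine le_max_of_le_right (le_max_one_log_rpow_inv_of_exp_rpow_le hx0.le hγ ?_)
  calc exp (x ^ γ) ≤ Γ x / x := by
        rw [hformula x hk₀x.le]; exact exp_rpow_le_rpow_mul_exp_div_self h1x.le hα hβ
    _ ≤ τ := hx ▸ hconv.div_le_deriv_of_map_zero hΓ0 hx0 (hdiff x hx0.le)

theorem stmt12_general (N : ℕ) (hN : 3 ≤ N) (k₀ : ℝ) (Γ : ℝ → ℝ)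
    (hconv : ConvexOn ℝ (Set.Ici 0) Γ)
    (hΓ0 : Γ 0 = 0)
    (hdiff : ∀ t : ℝ, 0 ≤ t → DifferentiableAt ℝ Γ t)
    (hformula : ∀ t : ℝ, k₀ ≤ t →
      Γ t = t ^ ((((N : ℝ) ^ 2 + N + 2)) / ((N : ℝ) * (N + 1))) *
        Real.exp (((N : ℝ) + 2) / N * t ^ ((2 : ℝ) / ((N : ℝ) + 1)))) :
    ∃ c : ℝ, 0 < c ∧ ∀ s : ℝ, 0 ≤ s →
      (∫ τ in (0:ℝ)..s, Function.invFun (deriv Γ) τ) ≤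
        c * s * (max 1 (Real.log s)) ^ (((N : ℝ) + 1) / 2) := by
  have hN' : (3 : ℝ) ≤ N := by exact_mod_cast hN
  have hα : 1 ≤ ((N : ℝ) ^ 2 + N + 2) / (N * (N + 1)) := by
    rw [one_le_div (by positivity)]; linarith
  have hβ : 1 ≤ ((N : ℝ) + 2) / N := by rw [one_le_div (by positivity)]; linarith
  have hγ : 0 < (2 : ℝ) / (N + 1) := by positivity
  have hγinv : ((2 : ℝ) / (N + 1))⁻¹ = (N + 1) / 2 := inv_div _ _
  -- `invFun` takes the junk value `Classical.arbitrary ℝ` off the range of `Γ'`.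
  set c := max (max k₀ 1) (Classical.arbitrary ℝ)
  have hc : 1 ≤ c := le_max_of_le_left (le_max_right _ _)
  refine ⟨c, one_pos.trans_le hc, fun s hs => ?_⟩
  set L := max 1 (log s) ^ (((N : ℝ) + 1) / 2)
  have hL : 1 ≤ L := one_le_rpow (le_max_left _ _) (by positivity)
  have hbound : ∀ τ ∈ Set.Icc 0 s, Function.invFun (deriv Γ) τ ≤ c * L := by
    intro τ hτ
    have hτL : max 1 (log τ) ^ (((N : ℝ) + 1) / 2) ≤ L :=
      rpow_le_rpow (by positivity) (max_one_log_le_max_one_log hτ.1 hτ.2) (by positivity)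
    have hcL : c ≤ c * L := le_mul_of_one_le_right (by positivity) hL
    refine (Function.invFun_le_max_arbitrary (B := max (max k₀ 1) L) fun x hx => ?_).trans
      (max_le (max_le ((le_max_left _ _).trans hcL) (le_mul_of_one_le_left (by positivity) hc))
        ((le_max_right _ _).trans hcL))
    have hxle := le_of_deriv_eq_of_eq_rpow_mul_exp hα hβ hγ hconv hΓ0 hdiff hformula hx
    rw [hγinv] at hxle
    exact hxle.trans (max_le_max_left _ hτL)
  simpa [mul_assoc, mul_comm, mul_left_comm] using
    intervalIntegral.integral_le_mul_of_le hs (by positivity) hbound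

theorem stmt12 (N : ℕ) (hN : 3 ≤ N) (k₀ : ℝ) (hk₀ : 0 < k₀) (Γ : ℝ → ℝ)
    (hmono : StrictMonoOn Γ (Set.Ici 0))
    (hconv : ConvexOn ℝ (Set.Ici 0) Γ)
    (hΓ0 : Γ 0 = 0)
    (hnonneg : ∀ t : ℝ, 0 ≤ t → 0 ≤ Γ t)
    (hdiff : ∀ t : ℝ, 0 ≤ t → DifferentiableAt ℝ Γ t)
    (hformula : ∀ t : ℝ, k₀ ≤ t →
      Γ t = t ^ ((((N : ℝ) ^ 2 + N + 2)) / ((N : ℝ) * (N + 1))) *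
        Real.exp (((N : ℝ) + 2) / N * t ^ ((2 : ℝ) / ((N : ℝ) + 1)))) :
    ∃ c : ℝ, 0 < c ∧ ∀ s : ℝ, 0 ≤ s →
      (∫ τ in (0:ℝ)..s, Function.invFun (deriv Γ) τ) ≤
        c * s * (max 1 (Real.log s)) ^ (((N : ℝ) + 1) / 2) :=
  stmt12_general N hN k₀ Γ hconv hΓ0 hdiff hformula
end

section
/- Let (Q, μ) be a finite measure space, v, w: Q → ℝ measurable, 0 < q, and suppose μ{|w| > h} ≤ C₂ h^(−a) for all h > 0 and μ{|v| > k} ≤ C₁ k^(−b) for all k > 0, with a, b, C₁, C₂ > 0. Then there exists C₃ > 0 (depending on a, b, q, C₁, C₂) such that μ{|w|^q |v| > λ} ≤ C₃ λ^(−ab/(qb+a)) for all λ > 0. -/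
open MeasureTheory

/-
If `f * g > t` then either `f > s` or `g > t / s`, so the tails of `f` and `g` control the tail
of `f * g` for every split point `s`. For tails decaying like `s ^ (-α)` and `u ^ (-β)`, the
choice `s = t ^ (β / (α + β))` balances both terms at `t ^ (-(α β / (α + β)))`. Applied to
`f = |w| ^ q`, whose tail decays with exponent `a / q`, and `g = |v|`, this gives the
exponent `a b / (q b + a)`.
-/

section PowerTail

variable {Q : Type*} [MeasurableSpace Q]

def PowerTailBound (μ : Measure Q) (f : Q → ℝ) (C a : ℝ) : Prop :=
  ∀ t : ℝ, 0 < t → μ {x | t < f x} ≤ ENNReal.ofReal (C * t ^ (-a))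

theorem measure_lt_mul_le_add (μ : Measure Q) {f g : Q → ℝ} (hg : 0 ≤ g) {s : ℝ} (hs : 0 < s)
    (t : ℝ) : μ {x | t < f x * g x} ≤ μ {x | s < f x} + μ {x | t / s < g x} := by
  refine (measure_mono fun x hx => ?_).trans (measure_union_le _ _)
  by_contra hnot
  simp only [Set.mem_union, Set.mem_ofPred_eq, not_or, not_lt] at hx hnot
  have : f x * g x ≤ s * (t / s) :=
    mul_le_mul hnot.1 hnot.2 (hg x) hs.le
  rw [mul_div_cancel₀ t hs.ne'] at this
  linarith

namespace PowerTailBound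

variable {μ : Measure Q}

theorem rpow_abs {w : Q → ℝ} {C a q : ℝ} (hw : PowerTailBound μ (fun x => |w x|) C a)
    (hq : 0 < q) : PowerTailBound μ (fun x => |w x| ^ q) C (a / q) := by
  intro t ht
  have hset : {x | t < |w x| ^ q} = {x | t ^ q⁻¹ < |w x|} := by
    ext x
    exact (Real.rpow_inv_lt_iff_of_pos ht.le (abs_nonneg _) hq).symm
  have hpow : (t ^ q⁻¹) ^ (-a) = t ^ (-(a / q)) := by
    rw [← Real.rpow_mul ht.le]
    ring_nf
  rw [hset, ← hpow]
  exact hw _ (by positivity)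

theorem mul {f g : Q → ℝ} {A B α β : ℝ} (hf : PowerTailBound μ f A α)
    (hg : PowerTailBound μ g B β) (hg0 : 0 ≤ g) (hA : 0 ≤ A) (hB : 0 ≤ B)
    (hαβ : α + β ≠ 0) : PowerTailBound μ (f * g) (A + B) (α * β / (α + β)) := by
  intro t ht
  set s := t ^ (β / (α + β))
  have hs : 0 < s := by positivity
  have hs_pow : s ^ (-α) = t ^ (-(α * β / (α + β))) := by
    rw [← Real.rpow_mul ht.le]
    ring_nf
  have hts_pow : (t / s) ^ (-β) = t ^ (-(α * β / (α + β))) := by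
    rw [← Real.rpow_one t, ← Real.rpow_sub ht, Real.rpow_one, ← Real.rpow_mul ht.le]
    congr 1
    field_simp
    ring
  calc μ {x | t < (f * g) x}
      ≤ μ {x | s < f x} + μ {x | t / s < g x} := measure_lt_mul_le_add μ hg0 hs t
    _ ≤ ENNReal.ofReal (A * s ^ (-α)) + ENNReal.ofReal (B * (t / s) ^ (-β)) :=
        add_le_add (hf s hs) (hg _ (by positivity))
    _ = ENNReal.ofReal ((A + B) * t ^ (-(α * β / (α + β)))) := by
        rw [hs_pow, hts_pow, add_mul, ENNReal.ofReal_add (by positivity) (by positivity)]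

end PowerTailBound

end PowerTail

theorem stmt13_general {Q : Type*} [MeasurableSpace Q] (μ : Measure Q)
    (v w : Q → ℝ)
    (q a b C₁ C₂ : ℝ) (hq : 0 < q) (ha : 0 < a) (hb : 0 < b)
    (hC₁ : 0 < C₁) (hC₂ : 0 < C₂)
    (hwle : ∀ h : ℝ, 0 < h → μ {x | h < |w x|} ≤ ENNReal.ofReal (C₂ * h ^ (-a)))
    (hvle : ∀ k : ℝ, 0 < k → μ {x | k < |v x|} ≤ ENNReal.ofReal (C₁ * k ^ (-b))) :
    ∃ C₃ : ℝ, 0 < C₃ ∧ ∀ lam : ℝ, 0 < lam →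
      μ {x | lam < |w x| ^ q * |v x|} ≤
        ENNReal.ofReal (C₃ * lam ^ (-(a * b / (q * b + a)))) := by
  have hprod := (PowerTailBound.rpow_abs hwle hq).mul hvle (fun x => abs_nonneg (v x))
    hC₂.le hC₁.le (by positivity)
  have hexp : a / q * b / (a / q + b) = a * b / (q * b + a) := by
    field_simp
    ring
  rw [hexp] at hprod
  exact ⟨C₂ + C₁, by positivity, hprod⟩

theorem stmt13 {Q : Type*} [MeasurableSpace Q] (μ : Measure Q) [IsFiniteMeasure μ]
    (v w : Q → ℝ) (hv : Measurable v) (hw : Measurable w)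
    (q a b C₁ C₂ : ℝ) (hq : 0 < q) (ha : 0 < a) (hb : 0 < b)
    (hC₁ : 0 < C₁) (hC₂ : 0 < C₂)
    (hwle : ∀ h : ℝ, 0 < h → μ {x | h < |w x|} ≤ ENNReal.ofReal (C₂ * h ^ (-a)))
    (hvle : ∀ k : ℝ, 0 < k → μ {x | k < |v x|} ≤ ENNReal.ofReal (C₁ * k ^ (-b))) :
    ∃ C₃ : ℝ, 0 < C₃ ∧ ∀ lam : ℝ, 0 < lam →
      μ {x | lam < |w x| ^ q * |v x|} ≤
        ENNReal.ofReal (C₃ * lam ^ (-(a * b / (q * b + a)))) :=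
  stmt13_general μ v w q a b C₁ C₂ hq ha hb hC₁ hC₂ hwle hvle
end

section
/- Let 1 < σ < 2, ε > 0, and define g(s) = Φ(s) − (2(σ−1)/σ²)·Ψ(s)² for s ≥ 0, where Φ(s) = (1/σ)[(ε+s)^σ − ε^σ] − ε^(σ−1) s and Ψ(s) = (ε+s)^(σ/2) − ε^(σ/2). Then g(0) = 0, g'(0) = 0, and g''(s) = ((σ−1)(2−σ)/σ)·(ε+s)^((σ−4)/2)·Ψ(s) ≥ 0 for all s ≥ 0; consequently g(s) ≥ 0 for all s ≥ 0. -/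
/-! The constant `2(σ-1)/σ²` is chosen so that `Φ''` cancels the term `2 Ψ'²` of `(Ψ²)''`; hence
`g'' = -(4(σ-1)/σ²) Ψ Ψ''`, which is nonnegative because `Ψ ≥ 0` and `Ψ` is concave for `σ < 2`.
Integrating twice from `g'(0) = g(0) = 0` gives `g ≥ 0`. -/

open Set Filter Topology

theorem monotoneOn_Ici_of_hasDerivAt_nonneg {f f' : ℝ → ℝ} {a : ℝ}
    (hf : ∀ x, a ≤ x → HasDerivAt f (f' x) x) (hf' : ∀ x, a < x → 0 ≤ f' x) :
    MonotoneOn f (Ici a) :=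
  monotoneOn_of_hasDerivWithinAt_nonneg (convex_Ici a)
    (fun x hx => (hf x hx).continuousAt.continuousWithinAt)
    (fun x hx => by rw [interior_Ici] at hx; exact (hf x (le_of_lt hx)).hasDerivWithinAt)
    (fun x hx => by rw [interior_Ici] at hx; exact hf' x hx)

theorem hasDerivAt_add_rpow {ε s : ℝ} (p : ℝ) (hs : 0 < ε + s) :
    HasDerivAt (fun t : ℝ => (ε + t) ^ p) (p * (ε + s) ^ (p - 1)) s := by
  simpa using ((hasDerivAt_id s).const_add ε).rpow_const (p := p) (Or.inl hs.ne')

namespace ShiftedPower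

variable (σ ε : ℝ)

noncomputable def Φ (s : ℝ) : ℝ := (1 / σ) * ((ε + s) ^ σ - ε ^ σ) - ε ^ (σ - 1) * s

noncomputable def Ψ (s : ℝ) : ℝ := (ε + s) ^ (σ / 2) - ε ^ (σ / 2)

noncomputable def g (s : ℝ) : ℝ := Φ σ ε s - (2 * (σ - 1) / σ ^ 2) * (Ψ σ ε s) ^ 2

noncomputable def gDeriv (s : ℝ) : ℝ :=
  (ε + s) ^ (σ - 1) - ε ^ (σ - 1) - (2 * (σ - 1) / σ) * Ψ σ ε s * (ε + s) ^ (σ / 2 - 1)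

noncomputable def gDeriv2 (s : ℝ) : ℝ :=
  ((σ - 1) * (2 - σ) / σ) * (ε + s) ^ ((σ - 4) / 2) * Ψ σ ε s

variable {σ ε}

theorem g_zero : g σ ε 0 = 0 := by simp [g, Φ, Ψ]

theorem gDeriv_zero : gDeriv σ ε 0 = 0 := by simp [gDeriv, Ψ]

theorem hasDerivAt_Ψ {s : ℝ} (hs : 0 < ε + s) :
    HasDerivAt (Ψ σ ε) ((σ / 2) * (ε + s) ^ (σ / 2 - 1)) s :=
  (hasDerivAt_add_rpow (σ / 2) hs).sub_const _

theorem hasDerivAt_g (hσ : σ ≠ 0) {s : ℝ} (hs : 0 < ε + s) :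
    HasDerivAt (g σ ε) (gDeriv σ ε s) s := by
  have hΦ := (((hasDerivAt_add_rpow σ hs).sub_const (ε ^ σ)).const_mul (1 / σ)).sub
    ((hasDerivAt_id s).const_mul (ε ^ (σ - 1)))
  have hΨsq := ((hasDerivAt_Ψ (σ := σ) hs).pow 2).const_mul (2 * (σ - 1) / σ ^ 2)
  refine (hΦ.sub hΨsq).congr_deriv ?_
  simp only [gDeriv]
  field_simp
  ring

theorem hasDerivAt_gDeriv (hσ : σ ≠ 0) {s : ℝ} (hs : 0 < ε + s) :
    HasDerivAt (gDeriv σ ε) (gDeriv2 σ ε s) s := by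
  have h : HasDerivAt (gDeriv σ ε) _ s :=
    ((hasDerivAt_add_rpow (σ - 1) hs).sub_const (ε ^ (σ - 1))).sub
      (((hasDerivAt_Ψ (σ := σ) hs).const_mul (2 * (σ - 1) / σ)).mul
        (hasDerivAt_add_rpow (σ / 2 - 1) hs))
  refine h.congr_deriv ?_
  have hsq : (ε + s) ^ (σ / 2 - 1) * (ε + s) ^ (σ / 2 - 1) = (ε + s) ^ (σ - 1 - 1) := by
    rw [← Real.rpow_add hs]; ring_nf
  rw [gDeriv2.eq_def, show (σ - 4) / 2 = σ / 2 - 1 - 1 by ring, ← hsq]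
  field_simp
  ring

theorem deriv_deriv_g (hσ : σ ≠ 0) {s : ℝ} (hs : 0 < ε + s) :
    deriv (deriv (g σ ε)) s = gDeriv2 σ ε s := by
  have hderiv : deriv (g σ ε) =ᶠ[𝓝 s] gDeriv σ ε := by
    filter_upwards [lt_mem_nhds (show -ε < s by linarith)] with t ht
    exact (hasDerivAt_g hσ (by linarith)).deriv
  rw [hderiv.deriv_eq, (hasDerivAt_gDeriv hσ hs).deriv]

theorem Ψ_nonneg (hσ : 0 ≤ σ) (hε : 0 ≤ ε) {s : ℝ} (hs : 0 ≤ s) : 0 ≤ Ψ σ ε s :=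
  sub_nonneg.2 (Real.rpow_le_rpow hε (by linarith) (by linarith))

theorem gDeriv2_nonneg (hσ1 : 1 ≤ σ) (hσ2 : σ ≤ 2) (hε : 0 ≤ ε) {s : ℝ} (hs : 0 ≤ s) :
    0 ≤ gDeriv2 σ ε s := by
  have hc : 0 ≤ (σ - 1) * (2 - σ) / σ :=
    div_nonneg (mul_nonneg (by linarith) (by linarith)) (by linarith)
  exact mul_nonneg (mul_nonneg hc (Real.rpow_nonneg (by linarith) _))
    (Ψ_nonneg (by linarith) hε hs)

theorem gDeriv_nonneg (hσ1 : 1 < σ) (hσ2 : σ < 2) (hε : 0 < ε) {s : ℝ} (hs : 0 ≤ s) :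
    0 ≤ gDeriv σ ε s := by
  have h := monotoneOn_Ici_of_hasDerivAt_nonneg
    (fun x (hx : 0 ≤ x) => hasDerivAt_gDeriv (by linarith) (by linarith))
    (fun x hx => gDeriv2_nonneg hσ1.le hσ2.le hε.le hx.le) self_mem_Ici hs hs
  rwa [gDeriv_zero] at h

theorem g_nonneg (hσ1 : 1 < σ) (hσ2 : σ < 2) (hε : 0 < ε) {s : ℝ} (hs : 0 ≤ s) :
    0 ≤ g σ ε s := by
  have h := monotoneOn_Ici_of_hasDerivAt_nonneg
    (fun x (hx : 0 ≤ x) => hasDerivAt_g (by linarith) (by linarith))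
    (fun x hx => gDeriv_nonneg hσ1 hσ2 hε hx.le) self_mem_Ici hs hs
  rwa [g_zero] at h

end ShiftedPower

open ShiftedPower in
theorem stmt19 (σ ε : ℝ) (hσ1 : 1 < σ) (hσ2 : σ < 2) (hε : 0 < ε) :
    let Φ : ℝ → ℝ := fun s => (1 / σ) * ((ε + s) ^ σ - ε ^ σ) - ε ^ (σ - 1) * s
    let Ψ : ℝ → ℝ := fun s => (ε + s) ^ (σ / 2) - ε ^ (σ / 2)
    let g : ℝ → ℝ := fun s => Φ s - (2 * (σ - 1) / σ ^ 2) * (Ψ s) ^ 2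
    g 0 = 0 ∧ deriv g 0 = 0 ∧
    (∀ s : ℝ, 0 ≤ s →
      deriv (deriv g) s = ((σ - 1) * (2 - σ) / σ) * (ε + s) ^ ((σ - 4) / 2) * Ψ s ∧
      0 ≤ deriv (deriv g) s) ∧
    (∀ s : ℝ, 0 ≤ s → 0 ≤ g s) := by
  intro _ _ _
  change g σ ε 0 = 0 ∧ deriv (g σ ε) 0 = 0 ∧
    (∀ s : ℝ, 0 ≤ s → deriv (deriv (g σ ε)) s = gDeriv2 σ ε s ∧ 0 ≤ deriv (deriv (g σ ε)) s) ∧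
    (∀ s : ℝ, 0 ≤ s → 0 ≤ g σ ε s)
  have hσ : σ ≠ 0 := by linarith
  refine ⟨g_zero, ?_, fun s hs => ?_, fun s hs => g_nonneg hσ1 hσ2 hε hs⟩
  · rw [(hasDerivAt_g hσ (by linarith)).deriv, gDeriv_zero]
  · rw [deriv_deriv_g hσ (by linarith)]
    exact ⟨rfl, gDeriv2_nonneg hσ1.le hσ2.le hε.le hs⟩
end
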